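/- Let W, W' ⊆ ℂ^(2n) be complex Lagrangian subspaces such that the Hermitian form h is positive definite on W and on W' (i.e. h(v,v) > 0 for all nonzero v in W, respectively W'). Then there exists a 2n×2n matrix g with real entries satisfying ω_ℂ(g·v, g·w) = ω_ℂ(v,w) for all v,w ∈ ℂ^(2n) such that g(W) = W'. In other words, the real symplectic group Sp(2n,ℝ) acts transitively on the set H_{n,0} of complex Lagrangians on which h is positive definite. -/

import Mathlib

open Complex

abbrev Vc (n : ℕ) : Type := Fin n ⊕ Fin n → ℂ

noncomputable def omegaC (n : ℕ) (v w : Vc n) : ℂ :=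
  ∑ k : Fin n, (v (Sum.inl k) * w (Sum.inr k) - v (Sum.inr k) * w (Sum.inl k))

def sigmaC (n : ℕ) (v : Vc n) : Vc n := fun k => starRingEnd ℂ (v k)

noncomputable def hC (n : ℕ) (v w : Vc n) : ℂ := Complex.I * omegaC n (sigmaC n v) w
noncomputable def matAct (n : ℕ) (g : Matrix (Fin n ⊕ Fin n) (Fin n ⊕ Fin n) ℝ) :
    Vc n →ₗ[ℂ] Vc n :=
  Matrix.mulVecLin (g.map (algebraMap ℝ ℂ))


/-!
The form `h` is positive definite on a positive Lagrangian `W`, so `W` has an `h`-orthonormal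
basis `w₁, …, wₙ`. Write `√2 wₖ = xₖ + i yₖ` with `xₖ, yₖ` real. Since `ω` vanishes on `W` and
on `σ W`, and `ω(σ wⱼ, wₖ) = -i δⱼₖ`, expanding `xₖ = (√2 wₖ + σ(√2 wₖ))/2` and
`yₖ = (√2 wₖ - σ(√2 wₖ))/(2i)` gives `ω(xⱼ, xₖ) = ω(yⱼ, yₖ) = 0` and `ω(yⱼ, xₖ) = δⱼₖ`: the real
matrix with columns `yₖ, xₖ` is symplectic. It maps `e_{n+k} + i eₖ` to `√2 wₖ`, hence the
standard positive Lagrangian spanned by these vectors onto `W`. So every positive Lagrangian lies in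
the `Sp(2n, ℝ)`-orbit of the standard one.
-/

open Matrix

section SymplecticForm

variable {n : ℕ}

theorem omegaC_eq_toLinearMap₂' (v w : Vc n) :
    omegaC n v w = Matrix.toLinearMap₂' ℂ (-J (Fin n) ℂ) v w := by
  simp [omegaC, Matrix.toLinearMap₂'_apply', J, dotProduct, mulVec, Fintype.sum_sum_type,
    fromBlocks, one_apply, Finset.sum_add_distrib, mul_comm, sub_eq_add_neg]

theorem omegaC_swap (v w : Vc n) : omegaC n w v = -omegaC n v w := by
  simp only [omegaC, ← Finset.sum_neg_distrib]
  exact Finset.sum_congr rfl fun _ _ => by ring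

theorem omegaC_sigmaC (v w : Vc n) :
    omegaC n (sigmaC n v) (sigmaC n w) = starRingEnd ℂ (omegaC n v w) := by
  simp [omegaC, sigmaC]

theorem sigmaC_add (v w : Vc n) : sigmaC n (v + w) = sigmaC n v + sigmaC n w := by
  ext; simp [sigmaC]

theorem sigmaC_smul (c : ℂ) (v : Vc n) : sigmaC n (c • v) = starRingEnd ℂ c • sigmaC n v := by
  ext; simp [sigmaC]

theorem sigmaC_sigmaC (v : Vc n) : sigmaC n (sigmaC n v) = v := by
  ext; simp [sigmaC]

theorem hC_conj_symm (v w : Vc n) : starRingEnd ℂ (hC n w v) = hC n v w := by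
  rw [hC, hC, map_mul, conj_I, ← omegaC_sigmaC, sigmaC_sigmaC, omegaC_swap]
  ring

theorem hC_smul_smul (a b : ℂ) (v w : Vc n) :
    hC n (a • v) (b • w) = starRingEnd ℂ a * b * hC n v w := by
  simp only [hC, sigmaC_smul, omegaC_eq_toLinearMap₂', map_smul, LinearMap.smul_apply,
    smul_eq_mul]
  ring

theorem hC_zero_left (w : Vc n) : hC n 0 w = 0 := by
  simp [hC, omegaC, sigmaC]

end SymplecticForm

section RealMatrices

variable {n : ℕ}

theorem matAct_mul (g h : Matrix (Fin n ⊕ Fin n) (Fin n ⊕ Fin n) ℝ) :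
    matAct n (g * h) = matAct n g ∘ₗ matAct n h := by
  rw [matAct, Matrix.map_mul, Matrix.mulVecLin_mul]
  rfl

theorem matAct_single (g : Matrix (Fin n ⊕ Fin n) (Fin n ⊕ Fin n) ℝ) (a : Fin n ⊕ Fin n) :
    matAct n g (Pi.single a 1) = fun c => (g c a : ℂ) := by
  ext c
  simp [matAct, mulVec_single]

theorem omegaC_matAct (g : Matrix (Fin n ⊕ Fin n) (Fin n ⊕ Fin n) ℝ) (v w : Vc n) :
    omegaC n (matAct n g v) (matAct n g w) =
      Matrix.toLinearMap₂' ℂ ((g.map (algebraMap ℝ ℂ))ᵀ * -J (Fin n) ℂ * g.map (algebraMap ℝ ℂ))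
        v w := by
  rw [omegaC_eq_toLinearMap₂', ← Matrix.toLinearMap₂'_comp]
  rfl

theorem omegaC_matAct_eq_iff (g : Matrix (Fin n ⊕ Fin n) (Fin n ⊕ Fin n) ℝ) :
    (∀ v w, omegaC n (matAct n g v) (matAct n g w) = omegaC n v w) ↔
      g ∈ symplecticGroup (Fin n) ℝ := by
  have hmap : (gᵀ * J (Fin n) ℝ * g).map (algebraMap ℝ ℂ) =
      (g.map (algebraMap ℝ ℂ))ᵀ * J (Fin n) ℂ * g.map (algebraMap ℝ ℂ) := by
    rw [Matrix.map_mul, Matrix.map_mul, transpose_map, map_J]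
  simp_rw [omegaC_matAct, omegaC_eq_toLinearMap₂', ← LinearMap.ext_iff₂,
    (Matrix.toLinearMap₂' ℂ).injective.eq_iff, SymplecticGroup.mem_iff',
    ← (Matrix.map_injective (algebraMap ℝ ℂ).injective).eq_iff, hmap, mul_neg, neg_mul,
    neg_inj, map_J]

theorem omegaC_matAct_eq_iff_single (g : Matrix (Fin n ⊕ Fin n) (Fin n ⊕ Fin n) ℝ) :
    (∀ v w, omegaC n (matAct n g v) (matAct n g w) = omegaC n v w) ↔
      ∀ a b, omegaC n (matAct n g (Pi.single a 1)) (matAct n g (Pi.single b 1)) =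
        omegaC n (Pi.single a 1) (Pi.single b 1) := by
  refine ⟨fun h a b => h _ _, fun h v w => ?_⟩
  simp_rw [omegaC_matAct, omegaC_eq_toLinearMap₂'] at h ⊢
  congr 2
  refine LinearMap.ext_basis (Pi.basisFun ℂ _) (Pi.basisFun ℂ _) fun a b => ?_
  simpa only [Pi.basisFun_apply] using h a b

theorem omegaC_single_single (a b : Fin n ⊕ Fin n) :
    omegaC n (Pi.single a 1) (Pi.single b 1) = -J (Fin n) ℂ a b := by
  rcases a with j | j <;> rcases b with k | k <;>
    simp [omegaC, J, Pi.single_apply, one_apply, eq_comm]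

end RealMatrices

theorem InnerProductSpace.Core.exists_basis_inner_eq_ite {𝕜 E : Type*} [RCLike 𝕜]
    [AddCommGroup E] [Module 𝕜 E] [FiniteDimensional 𝕜 E] (c : InnerProductSpace.Core 𝕜 E) :
    ∃ b : Module.Basis (Fin (Module.finrank 𝕜 E)) 𝕜 E,
      ∀ i j, c.inner (b i) (b j) = if i = j then 1 else 0 := by
  let := c.toNormedAddCommGroup
  let := InnerProductSpace.ofCore c.toCore
  let b := stdOrthonormalBasis 𝕜 E
  exact ⟨b.toBasis, by simpa [orthonormal_iff_ite] using b.orthonormal⟩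

section PositiveLagrangian

variable {n : ℕ}

theorem exists_hC_orthonormal_basis (W : Submodule ℂ (Vc n)) (hWdim : Module.finrank ℂ W = n)
    (hWpos : ∀ v ∈ W, v ≠ 0 → 0 < (hC n v v).re ∧ (hC n v v).im = 0) :
    ∃ w : Fin n → Vc n, (∀ i, w i ∈ W) ∧ (∀ i j, hC n (w i) (w j) = if i = j then 1 else 0) ∧
      Submodule.span ℂ (Set.range w) = W := by
  have hpos (v : W) (hv : (v : Vc n) ≠ 0) : 0 < (hC n v v).re := (hWpos v v.2 hv).1
  let c : InnerProductSpace.Core ℂ W :=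
    { inner v w := hC n v w
      conj_inner_symm v w := hC_conj_symm _ _
      re_inner_nonneg v := by
        by_cases hv : (v : Vc n) = 0
        · simp [hv, hC_zero_left]
        · exact (hpos v hv).le
      definite v hv := by
        by_contra hne
        have := hpos v (by simpa using hne)
        simp_all
      add_left u v w := by
        simp only [Submodule.coe_add, hC, sigmaC_add, omegaC_eq_toLinearMap₂', map_add,
          LinearMap.add_apply]
        ring
      smul_left v w a := by
        simp only [Submodule.coe_smul, hC, sigmaC_smul, omegaC_eq_toLinearMap₂', map_smul,
          LinearMap.smul_apply, smul_eq_mul]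
        ring }
  obtain ⟨b, hb⟩ := c.exists_basis_inner_eq_ite
  let b' := b.reindex (finCongr hWdim)
  refine ⟨fun i => b' i, fun i => (b' i).2, fun i j => ?_, ?_⟩
  · simp only [b', Module.Basis.reindex_apply]
    exact (hb _ _).trans (by simp)
  · rw [Set.range_comp', ← Submodule.coe_subtype, ← Submodule.map_span, b'.span_eq,
      Submodule.map_subtype_top]

noncomputable def frameMatrix (w : Fin n → Vc n) : Matrix (Fin n ⊕ Fin n) (Fin n ⊕ Fin n) ℝ :=
  Matrix.of fun a => Sum.elim (fun k => (w k a).im) (fun k => (w k a).re)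

noncomputable def stdFrame (k : Fin n) : Vc n :=
  Pi.single (Sum.inr k) 1 + I • Pi.single (Sum.inl k) 1

noncomputable def stdLagrangian (n : ℕ) : Submodule ℂ (Vc n) :=
  Submodule.span ℂ (Set.range (@stdFrame n))

theorem matAct_frameMatrix_stdFrame (w : Fin n → Vc n) (k : Fin n) :
    matAct n (frameMatrix w) (stdFrame k) = w k := by
  ext a
  simp [stdFrame, matAct_single, frameMatrix, mul_comm I, re_add_im]

theorem matAct_frameMatrix_inl (w : Fin n → Vc n) (k : Fin n) :
    matAct n (frameMatrix w) (Pi.single (Sum.inl k) 1) = (2 * I)⁻¹ • (w k - sigmaC n (w k)) := by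
  ext a
  simp only [frameMatrix, matAct_single, of_apply, Sum.elim_inl, im_eq_sub_conj, Pi.smul_apply,
    Pi.sub_apply, sigmaC, smul_eq_mul]
  ring

theorem matAct_frameMatrix_inr (w : Fin n → Vc n) (k : Fin n) :
    matAct n (frameMatrix w) (Pi.single (Sum.inr k) 1) = (2 : ℂ)⁻¹ • (w k + sigmaC n (w k)) := by
  ext a
  simp only [frameMatrix, matAct_single, of_apply, Sum.elim_inr, re_eq_add_conj, Pi.smul_apply,
    Pi.add_apply, sigmaC, smul_eq_mul]
  ring

theorem frameMatrix_mem_symplecticGroup (w : Fin n → Vc n)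
    (hiso : ∀ j k, omegaC n (w j) (w k) = 0)
    (hpos : ∀ j k, hC n (w j) (w k) = if j = k then 2 else 0) :
    frameMatrix w ∈ symplecticGroup (Fin n) ℝ := by
  have hσσ (j k : Fin n) : omegaC n (sigmaC n (w j)) (sigmaC n (w k)) = 0 := by
    rw [omegaC_sigmaC, hiso, map_zero]
  have hσ₁ (j k : Fin n) : omegaC n (sigmaC n (w j)) (w k) = -I * if j = k then 2 else 0 := by
    rw [← hpos, hC, ← mul_assoc, neg_mul, I_mul_I, neg_neg, one_mul]
  have hσ₂ (j k : Fin n) : omegaC n (w j) (sigmaC n (w k)) = I * if j = k then 2 else 0 := by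
    rw [omegaC_swap, hσ₁, neg_mul, neg_neg]
    simp_rw [eq_comm]
  rw [← omegaC_matAct_eq_iff, omegaC_matAct_eq_iff_single]
  rintro (j | j) (k | k) <;>
    simp only [matAct_frameMatrix_inl, matAct_frameMatrix_inr, omegaC_single_single,
      omegaC_eq_toLinearMap₂' (_ • _), map_smul, map_sub, map_add, LinearMap.smul_apply,
      LinearMap.sub_apply, LinearMap.add_apply, ← omegaC_eq_toLinearMap₂', hiso, hσσ, hσ₁, hσ₂] <;>
    by_cases hjk : j = k <;> simp [hjk, J, one_apply] <;> field_simp <;> ring_nf <;> simp [I_sq]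

theorem exists_symplectic_map_stdLagrangian (W : Submodule ℂ (Vc n))
    (hWdim : Module.finrank ℂ W = n) (hWiso : ∀ v ∈ W, ∀ w ∈ W, omegaC n v w = 0)
    (hWpos : ∀ v ∈ W, v ≠ 0 → 0 < (hC n v v).re ∧ (hC n v v).im = 0) :
    ∃ g : symplecticGroup (Fin n) ℝ, (stdLagrangian n).map (matAct n g) = W := by
  obtain ⟨w, hwW, horth, hspan⟩ := exists_hC_orthonormal_basis W hWdim hWpos
  -- `h (stdFrame k) (stdFrame k) = 2`, so the orthonormal basis is rescaled by `√2`.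
  set c : ℂ := (Real.sqrt 2 : ℂ)
  have hc : starRingEnd ℂ c * c = 2 := by
    rw [conj_ofReal, ← ofReal_mul, Real.mul_self_sqrt zero_le_two, ofReal_ofNat]
  have hiso (j k : Fin n) : omegaC n (c • w j) (c • w k) = 0 :=
    hWiso _ (W.smul_mem c (hwW j)) _ (W.smul_mem c (hwW k))
  have hpos (j k : Fin n) : hC n (c • w j) (c • w k) = if j = k then 2 else 0 := by
    rw [hC_smul_smul, hc, horth]
    split_ifs <;> norm_num
  refine ⟨⟨frameMatrix _, frameMatrix_mem_symplecticGroup _ hiso hpos⟩, ?_⟩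
  rw [stdLagrangian, Submodule.map_span, ← Set.range_comp]
  simp only [Function.comp_def, matAct_frameMatrix_stdFrame]
  rw [Set.range_smul, Submodule.span_smul_eq_of_isUnit _ _ (by simp [c]), hspan]

end PositiveLagrangian

theorem sp_transitive_on_positive_lagrangians_general (n : ℕ)
    (W W' : Submodule ℂ (Vc n))
    (hWdim : Module.finrank ℂ W = n) (hW'dim : Module.finrank ℂ W' = n)
    (hWiso : ∀ v ∈ W, ∀ w ∈ W, omegaC n v w = 0)
    (hW'iso : ∀ v ∈ W', ∀ w ∈ W', omegaC n v w = 0)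
    (hWpos : ∀ v ∈ W, v ≠ 0 → 0 < (hC n v v).re ∧ (hC n v v).im = 0)
    (hW'pos : ∀ v ∈ W', v ≠ 0 → 0 < (hC n v v).re ∧ (hC n v v).im = 0) :
    ∃ g : Matrix (Fin n ⊕ Fin n) (Fin n ⊕ Fin n) ℝ,
      (∀ v w : Vc n, omegaC n (matAct n g v) (matAct n g w) = omegaC n v w) ∧
      Submodule.map (matAct n g) W = W' := by
  obtain ⟨g₁, hg₁⟩ := exists_symplectic_map_stdLagrangian W hWdim hWiso hWpos
  obtain ⟨g₂, hg₂⟩ := exists_symplectic_map_stdLagrangian W' hW'dim hW'iso hW'pos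
  refine ⟨↑(g₂ * g₁⁻¹), (omegaC_matAct_eq_iff _).2 (g₂ * g₁⁻¹).2, ?_⟩
  rw [← hg₁, ← hg₂, ← Submodule.map_comp, ← matAct_mul, ← Submonoid.coe_mul,
    inv_mul_cancel_right]

theorem sp_transitive_on_positive_lagrangians (n : ℕ) (hn : 1 ≤ n)
    (W W' : Submodule ℂ (Vc n))
    (hWdim : Module.finrank ℂ W = n) (hW'dim : Module.finrank ℂ W' = n)
    (hWiso : ∀ v ∈ W, ∀ w ∈ W, omegaC n v w = 0)
    (hW'iso : ∀ v ∈ W', ∀ w ∈ W', omegaC n v w = 0)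
    (hWpos : ∀ v ∈ W, v ≠ 0 → 0 < (hC n v v).re ∧ (hC n v v).im = 0)
    (hW'pos : ∀ v ∈ W', v ≠ 0 → 0 < (hC n v v).re ∧ (hC n v v).im = 0) :
    ∃ g : Matrix (Fin n ⊕ Fin n) (Fin n ⊕ Fin n) ℝ,
      (∀ v w : Vc n, omegaC n (matAct n g v) (matAct n g w) = omegaC n v w) ∧
      Submodule.map (matAct n g) W = W' :=
  sp_transitive_on_positive_lagrangians_general n W W' hWdim hW'dim hWiso hW'iso hWpos hW'pos
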